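/- Let X be a compact manifold with boundary. There exists N ≥ 1 and a topological embedding i : X → ℝ^{N−1} × ℝ₊ such that i(∂X) ⊆ ℝ^{N−1} × {0} and i(interior X) ⊆ ℝ^{N−1} × (0, ∞). -/

import Mathlib

/-!
By the (weak) Whitney embedding theorem `X` embeds in some `ℝ^M`, so it is metrizable; the
boundary of a `C¹` manifold is closed, so the distance to it is a continuous function vanishing
exactly on `∂X`. Appending that function as a last coordinate keeps the map an embedding and
puts the boundary in the hyperplane and the interior in the open half-space.
-/

open scoped Manifold
open Topology Metric

theorem exists_continuous_nonneg_eq_zero_iff_mem {α : Type*} [TopologicalSpace α]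
    [TopologicalSpace.PseudoMetrizableSpace α] {s : Set α} (hs : IsClosed s) :
    ∃ f : α → ℝ, Continuous f ∧ (∀ x, 0 ≤ f x) ∧ ∀ x, f x = 0 ↔ x ∈ s := by
  let := TopologicalSpace.pseudoMetrizableSpacePseudoMetric α
  rcases s.eq_empty_or_nonempty with rfl | hne
  · exact ⟨fun _ => 1, continuous_const, fun _ => zero_le_one, by simp⟩
  · refine ⟨(infDist · s), continuous_infDist_pt s, fun _ => infDist_nonneg, fun x => ?_⟩
    refine ⟨fun h => ?_, infDist_zero_of_mem⟩
    by_contra hx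
    exact ((hs.notMem_iff_infDist_pos hne).1 hx).ne' h

theorem Topology.IsEmbedding.euclideanSpace_snoc {X : Type*} [TopologicalSpace X] {M : ℕ}
    {e : X → EuclideanSpace ℝ (Fin M)} (he : IsEmbedding e) {f : X → ℝ}
    (hf : Continuous f) :
    IsEmbedding fun x => WithLp.toLp 2 (Fin.snoc (e x).ofLp (f x) : Fin (M + 1) → ℝ) := by
  let init (y : EuclideanSpace ℝ (Fin (M + 1))) : EuclideanSpace ℝ (Fin M) :=
    WithLp.toLp 2 (Fin.init y.ofLp)
  refine .of_comp (g := init) (by fun_prop) (by fun_prop) ?_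
  convert he using 1
  ext x : 1
  simp [init]

/-- a compact manifold with boundary embeds in
`ℝ^{N−1} × ℝ₊` for some `N ≥ 1`, with the boundary landing exactly in the
hyperplane `ℝ^{N−1} × {0}` and the interior in the open half-space
`ℝ^{N−1} × (0, ∞)`. -/
theorem compact_manifold_with_boundary_embeds_in_half_space
    {n : ℕ} [NeZero n] {X : Type*} [TopologicalSpace X]
    [ChartedSpace (EuclideanHalfSpace n) X]
    [IsManifold (𝓡∂ n) (⊤ : ℕ∞) X]
    [CompactSpace X] [T2Space X] :
    ∃ (N : ℕ) (hN : 0 < N) (i : X → EuclideanSpace ℝ (Fin N)),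
      Topology.IsEmbedding i ∧
      (∀ x : X, 0 ≤ i x ⟨N - 1, by omega⟩) ∧
      (∀ x : X, x ∈ (𝓡∂ n).boundary X → i x ⟨N - 1, by omega⟩ = 0) ∧
      (∀ x : X, x ∈ (𝓡∂ n).interior X → 0 < i x ⟨N - 1, by omega⟩) := by
  obtain ⟨M, e, -, he, -⟩ := exists_embedding_euclidean_of_compact (I := 𝓡∂ n) (M := X)
  have : TopologicalSpace.MetrizableSpace X := he.isEmbedding.metrizableSpace
  obtain ⟨f, hf, hf_nonneg, hf_zero⟩ := exists_continuous_nonneg_eq_zero_iff_mem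
    ((𝓡∂ n).isClosed_boundary (n := ((⊤ : ℕ∞) : WithTop ℕ∞)) (by simp) (M := X))
  set i : X → EuclideanSpace ℝ (Fin (M + 1)) :=
    fun x => WithLp.toLp 2 (Fin.snoc (e x).ofLp (f x))
  have hi_last (x : X) : i x (Fin.last M) = f x := by simp [i]
  refine ⟨M + 1, M.succ_pos, i, he.isEmbedding.euclideanSpace_snoc hf,
    fun x => hi_last x ▸ hf_nonneg x, fun x hx => hi_last x ▸ (hf_zero x).2 hx,
    fun x hx => ?_⟩
  have hx_not_boundary := ((𝓡∂ n).isInteriorPoint_iff_not_isBoundaryPoint x).1 hx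
  exact hi_last x ▸ (hf_nonneg x).lt_of_ne' fun h => hx_not_boundary ((hf_zero x).1 h)
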